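/- arXiv:1911.02756 — 7 statements merged into one kernel-verified Lean document; each statement's English description precedes it below -/
import Mathlib

section
/- Let n ≥ 2 and let x ∈ ℝ^n satisfy ∑_{i=1}^n x_i = 0. For distinct i, j let A_{ij}x denote the vector obtained from x by the pair-averaging operation at {i,j}. Then the average over all C(n,2) unordered pairs {i,j} of ∑_{l=1}^n (A_{ij}x)_l² equals (1 − 1/(n−1)) ∑_{l=1}^n x_l². Equivalently, for the repeated averaging chain, E(S(k+1) | F_k) = (1 − 1/(n−1)) S(k), where S(k) = ∑_{i=1}^n x_{k,i}². -/
open MeasureTheory Finset Filter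
open scoped ENNReal NNReal

/-- The set of unordered pairs of distinct indices in `Fin n`, encoded as
2-element subsets of `Fin n`. -/
abbrev Pairs (n : ℕ) : Type := {s : Finset (Fin n) // s.card = 2}

instance (n : ℕ) : MeasurableSpace (Pairs n) := ⊤

/-- The uniform probability measure on the set of pairs. -/
noncomputable def uniformPair (n : ℕ) : Measure (Pairs n) :=
  (Fintype.card (Pairs n) : ℝ≥0∞)⁻¹ • Measure.count

/-- `μ` is the infinite product over `ℕ` of the uniform measure on pairs:
its finite-dimensional marginals are the finite uniform product measures.
(This characterizes the infinite product measure uniquely.) -/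
def IsProductLaw (n : ℕ) (μ : Measure (ℕ → Pairs n)) : Prop :=
  ∀ K : ℕ, μ.map (fun ω (i : Fin K) => ω i) = Measure.pi fun _ : Fin K => uniformPair n

/-- The pair-averaging operation: both coordinates in `s` (a 2-element set `{i,j}`)
are replaced by `(x i + x j)/2`; the other coordinates are unchanged. -/
noncomputable def avgStep {n : ℕ} (s : Finset (Fin n)) (x : Fin n → ℝ) : Fin n → ℝ :=
  fun l => if l ∈ s then (∑ m ∈ s, x m) / 2 else x l

/-- The repeated averaging chain started at `x0`, driven by the pair sequence `ω`. -/
noncomputable def chain {n : ℕ} (x0 : Fin n → ℝ) (ω : ℕ → Pairs n) : ℕ → Fin n → ℝ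
  | 0 => x0
  | k + 1 => avgStep (ω k).1 (chain x0 ω k)

/-- `T(k) = ∑_i |x_{k,i} - 1/n|`. -/
noncomputable def Tdist {n : ℕ} (x0 : Fin n → ℝ) (ω : ℕ → Pairs n) (k : ℕ) : ℝ :=
  ∑ i, |chain x0 ω k i - 1 / n|

/-- The initial vector `(1,0,…,0)`. -/
def e1 (n : ℕ) : Fin n → ℝ := fun i => if i.val = 0 then 1 else 0

/-- The standard normal cumulative distribution function. -/
noncomputable def stdGaussianCDF (x : ℝ) : ℝ :=
  ∫ t in Set.Iic x, (2 * Real.pi) ^ (-(1:ℝ)/2) * Real.exp (-t ^ 2 / 2)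

/-!
Averaging at `{i, j}` lowers `∑ xₗ²` by exactly `(xᵢ - xⱼ)² / 2`. Summing over all ordered
pairs, `∑_{i,j} (xᵢ - xⱼ)² = 2 (n ∑ xᵢ² - (∑ xᵢ)²)`, and each unordered pair is counted twice;
when `∑ xᵢ = 0` the total loss over the `n(n-1)/2` pairs is `n ∑ xᵢ² / 2`, i.e. `1/(n-1)` of
`∑ xᵢ²` on average.
-/

/-- The fibre of `(a, b) ↦ {a, b}` over a 2-set `t` is `t.offDiag`, which has two elements. -/
theorem Finset.sum_offDiag_pair_eq_two_nsmul {α M : Type*} [DecidableEq α] [AddCommMonoid M]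
    (s : Finset α) (g : Finset α → M) :
    ∑ p ∈ s.offDiag, g {p.1, p.2} = 2 • ∑ t ∈ s.powersetCard 2, g t := by
  have mem_iff : ∀ (p : α × α) (t : Finset α),
      p ∈ s.offDiag ∧ t ∈ ({{p.1, p.2}} : Finset _) ↔ p ∈ t.offDiag ∧ t ∈ s.powersetCard 2 := by
    rintro ⟨a, b⟩ t
    simp only [mem_powersetCard, mem_offDiag, mem_singleton]
    constructor
    · rintro ⟨⟨ha, hb, hab⟩, rfl⟩
      exact ⟨⟨by simp, by simp, hab⟩, insert_subset ha (singleton_subset_iff.2 hb), card_pair hab⟩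
    · rintro ⟨⟨ha, hb, hab⟩, hts, ht⟩
      refine ⟨⟨hts ha, hts hb, hab⟩,
        (eq_of_subset_of_card_le (insert_subset ha (singleton_subset_iff.2 hb)) ?_).symm⟩
      rw [ht, card_pair hab]
  calc ∑ p ∈ s.offDiag, g {p.1, p.2}
      = ∑ p ∈ s.offDiag, ∑ t ∈ ({{p.1, p.2}} : Finset _), g t := by simp only [sum_singleton]
    _ = ∑ t ∈ s.powersetCard 2, ∑ p ∈ t.offDiag, g t := sum_comm' mem_iff
    _ = 2 • ∑ t ∈ s.powersetCard 2, g t := by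
        rw [smul_sum]
        refine sum_congr rfl fun t ht => ?_
        rw [sum_const, offDiag_card, (mem_powersetCard.1 ht).2]

theorem Finset.sum_sum_sub_sq {ι R : Type*} [CommRing R] (s : Finset ι) (x : ι → R) :
    ∑ i ∈ s, ∑ j ∈ s, (x i - x j) ^ 2 = 2 * (#s * ∑ i ∈ s, x i ^ 2 - (∑ i ∈ s, x i) ^ 2) := by
  simp only [sub_sq, sum_add_distrib, sum_sub_distrib, sum_const, nsmul_eq_mul, ← mul_sum,
    ← sum_mul, mul_assoc]
  ring

theorem Finset.sum_offDiag_sub_sq {ι R : Type*} [DecidableEq ι] [CommRing R] (s : Finset ι)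
    (x : ι → R) :
    ∑ p ∈ s.offDiag, (x p.1 - x p.2) ^ 2 = 2 * (#s * ∑ i ∈ s, x i ^ 2 - (∑ i ∈ s, x i) ^ 2) := by
  rw [← sum_sum_sub_sq, ← sum_product']
  refine sum_subset (fun p hp => mem_product.2 ⟨(mem_offDiag.1 hp).1, (mem_offDiag.1 hp).2.1⟩)
    fun p hp hp' => ?_
  obtain ⟨h1, h2⟩ := mem_product.1 hp
  have : p.1 = p.2 := by_contra fun h => hp' (mem_offDiag.2 ⟨h1, h2, h⟩)
  rw [this, sub_self, zero_pow two_ne_zero]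

theorem sum_sq_avgStep_pair {n : ℕ} {i j : Fin n} (hij : i ≠ j) (x : Fin n → ℝ) :
    ∑ l, avgStep {i, j} x l ^ 2 = ∑ l, x l ^ 2 - (x i - x j) ^ 2 / 2 := by
  have hsupp : ∑ l, (avgStep {i, j} x l ^ 2 - x l ^ 2)
      = ∑ l ∈ {i, j}, (avgStep {i, j} x l ^ 2 - x l ^ 2) :=
    (sum_subset (subset_univ _) fun l _ hl => by simp only [avgStep, if_neg hl, sub_self]).symm
  have hi : avgStep {i, j} x i = (x i + x j) / 2 := by simp [avgStep, sum_pair hij]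
  have hj : avgStep {i, j} x j = (x i + x j) / 2 := by simp [avgStep, sum_pair hij]
  rw [sum_sub_distrib, sum_pair hij, hi, hj] at hsupp
  linarith

theorem two_mul_sum_pairs_sum_sq_avgStep (n : ℕ) (x : Fin n → ℝ) :
    2 * ∑ s : Pairs n, ∑ l, avgStep s.1 x l ^ 2
      = (n : ℝ) * (n - 2) * ∑ l, x l ^ 2 + (∑ l, x l) ^ 2 := by
  have hdouble := sum_offDiag_pair_eq_two_nsmul univ fun s => ∑ l, avgStep s x l ^ 2
  rw [two_nsmul, ← two_mul] at hdouble
  rw [← sum_subtype _ (fun _ => mem_powersetCard_univ) (fun s => ∑ l, avgStep s x l ^ 2),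
    ← hdouble, sum_congr rfl fun p hp => sum_sq_avgStep_pair (mem_offDiag.1 hp).2.2 x,
    sum_sub_distrib, ← sum_div, sum_offDiag_sub_sq, sum_const, offDiag_card, card_univ,
    Fintype.card_fin, nsmul_eq_mul, Nat.cast_sub (Nat.le_mul_self n)]
  push_cast
  ring

/-- **Proposition (one-step `L²` contraction).** If `∑ x_i = 0`, the average over all
`C(n,2)` unordered pairs `{i,j}` of `∑ₗ (A_{ij}x)ₗ²` equals `(1 - 1/(n-1)) ∑ₗ xₗ²`;
equivalently `E(S(k+1) | F_k) = (1 - 1/(n-1)) S(k)` for the repeated averaging chain. -/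
theorem one_step_L2_contraction (n : ℕ) (hn : 2 ≤ n)
    (x : Fin n → ℝ) (hx : ∑ i, x i = 0) :
    (∑ s : Pairs n, ∑ l, (avgStep s.1 x l) ^ 2) / ((n : ℝ) * ((n : ℝ) - 1) / 2)
      = (1 - 1 / ((n : ℝ) - 1)) * ∑ l, x l ^ 2 := by
  have hn' : (2 : ℝ) ≤ n := by exact_mod_cast hn
  have htotal := two_mul_sum_pairs_sum_sq_avgStep n x
  rw [hx] at htotal
  have hn1 : (n : ℝ) - 1 ≠ 0 := by linarith
  field_simp
  linear_combination htotal
end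

section
/- Let n ≥ 3, let x_0 ∈ ℝ^n with ∑_{i=1}^n x_{0,i} = 0, and let τ = 1 − 1/(n−1). For the repeated averaging chain under the measure μ_n, the sequence M_k = S(k)/τ^k, where S(k) = ∑_{i=1}^n x_{k,i}², is a nonnegative martingale, and for μ_n-almost every pair sequence ω the limit lim_{k→∞} S(k,ω)/τ^k exists and is finite. -/
open MeasureTheory Finset Filter
open scoped ENNReal NNReal

/-- The filtration `F_k = σ(ω_0, …, ω_{k-1})` generated by the first `k` chosen pairs. -/
noncomputable def pairFiltration (n : ℕ) :
    Filtration ℕ (inferInstance : MeasurableSpace (ℕ → Pairs n)) where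
  seq K := MeasurableSpace.comap (fun (ω : ℕ → Pairs n) (i : Fin K) => ω i) inferInstance
  mono' := by
    intro K L hKL
    dsimp only
    rw [show (fun (ω : ℕ → Pairs n) (i : Fin K) => ω i)
        = (fun (g : Fin L → Pairs n) (i : Fin K) => g (Fin.castLE hKL i))
          ∘ (fun (ω : ℕ → Pairs n) (i : Fin L) => ω i) from rfl,
      ← MeasurableSpace.comap_comp]
    exact MeasurableSpace.comap_mono (measurable_iff_comap_le.mp
      (measurable_pi_lambda _ fun i => measurable_pi_apply _))
  le' K := measurable_iff_comap_le.mp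
    (measurable_pi_lambda _ fun i => measurable_pi_apply _)

/-! Averaging the pair `{a, b}` lowers `∑ xᵢ²` by `(x_a - x_b)² / 2` and keeps `∑ xᵢ`. Summed over
all `n (n - 1) / 2` pairs, the squared differences give `n ∑ xᵢ² - (∑ xᵢ)²`, so for a zero-sum vector
the expected value of `S(k + 1)` given the first `k` pairs is `(1 - 1/(n - 1)) S(k)`. Hence
`S(k) / τ^k` is a nonnegative martingale; its `L¹` norm is its constant mean `S(0)`, and Doob's
convergence theorem gives the almost sure limit. -/

namespace PairAveraging
variable {n : ℕ}

lemma sum_comp_avgStep (φ : ℝ → ℝ) (s : Finset (Fin n)) (x : Fin n → ℝ) :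
    ∑ l, φ (avgStep s x l) = ∑ l, φ (x l) + ∑ l ∈ s, (φ ((∑ m ∈ s, x m) / 2) - φ (x l)) := by
  simp only [avgStep, apply_ite, Finset.sum_ite, Finset.filter_mem_eq_inter, Finset.univ_inter,
    Finset.sum_sub_distrib]
  rw [← Finset.sum_compl_add_sum s (fun l => φ (x l)), Finset.compl_eq_univ_sdiff,
    Finset.filter_notMem_eq_sdiff]
  ring

lemma sum_avgStep {s : Finset (Fin n)} (hs : s.card = 2) (x : Fin n → ℝ) :
    ∑ l, avgStep s x l = ∑ l, x l := by
  obtain ⟨a, b, hab, rfl⟩ := Finset.card_eq_two.1 hs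
  have h := sum_comp_avgStep id {a, b} x
  simp only [id, Finset.sum_pair hab] at h
  rw [h]
  ring

lemma sum_sq_avgStep {s : Finset (Fin n)} (hs : s.card = 2) (x : Fin n → ℝ) :
    ∑ l, avgStep s x l ^ 2 = ∑ l, x l ^ 2 - (∑ a ∈ s, ∑ b ∈ s, (x a - x b) ^ 2) / 4 := by
  obtain ⟨a, b, hab, rfl⟩ := Finset.card_eq_two.1 hs
  rw [sum_comp_avgStep (· ^ 2)]
  simp only [Finset.sum_pair hab]
  ring

lemma sum_sum_sub_sq {ι : Type*} [Fintype ι] (x : ι → ℝ) :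
    ∑ a, ∑ b, (x a - x b) ^ 2 = 2 * Fintype.card ι * ∑ i, x i ^ 2 - 2 * (∑ i, x i) ^ 2 := by
  simp only [sub_sq, Finset.sum_add_distrib, Finset.sum_sub_distrib, Finset.sum_const,
    Finset.card_univ, nsmul_eq_mul, mul_assoc, ← Finset.mul_sum, ← Finset.sum_mul]
  rw [sq (∑ i, x i), Finset.sum_mul_sum]
  ring

lemma pair_eq_of_mem_of_mem {a b : Fin n} (hab : a ≠ b) {s : Pairs n} (ha : a ∈ s.1)
    (hb : b ∈ s.1) : s = ⟨{a, b}, Finset.card_pair hab⟩ :=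
  Subtype.ext (Finset.eq_of_superset_of_card_ge (Finset.insert_subset ha
    (Finset.singleton_subset_iff.2 hb)) (by rw [s.2, Finset.card_pair hab]))

lemma sum_pairs_sum_sum (g : Fin n → Fin n → ℝ) (hg : ∀ a, g a a = 0) :
    ∑ s : Pairs n, ∑ a ∈ s.1, ∑ b ∈ s.1, g a b = ∑ a, ∑ b, g a b := by
  have hsum : ∀ s : Pairs n, ∑ a ∈ s.1, ∑ b ∈ s.1, g a b
      = ∑ a, ∑ b, if a ∈ s.1 ∧ b ∈ s.1 then g a b else 0 := by
    simp only [ite_and, Finset.sum_ite_irrel, Finset.sum_ite_mem, Finset.univ_inter,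
      Finset.sum_const_zero, implies_true]
  rw [Finset.sum_congr rfl fun s _ => hsum s, Finset.sum_comm]
  refine Finset.sum_congr rfl fun a _ => ?_
  rw [Finset.sum_comm]
  refine Finset.sum_congr rfl fun b _ => ?_
  by_cases hab : a = b
  · simp [hab, hg]
  · rw [Finset.sum_eq_single_of_mem ⟨{a, b}, Finset.card_pair hab⟩ (Finset.mem_univ _)]
    · simp
    · rintro s - hs
      exact if_neg fun h => hs (pair_eq_of_mem_of_mem hab h.1 h.2)

lemma card_pairs : (Fintype.card (Pairs n) : ℝ) = n * (n - 1) / 2 := by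
  rw [Fintype.card_finset_len, Fintype.card_fin, Nat.cast_choose_two]

lemma sum_pairs_sum_sq_avgStep (hn : 2 ≤ n) {x : Fin n → ℝ} (hx : ∑ i, x i = 0) :
    ∑ s : Pairs n, ∑ i, avgStep s.1 x i ^ 2
      = Fintype.card (Pairs n) * ((1 - 1 / ((n : ℝ) - 1)) * ∑ i, x i ^ 2) := by
  have hn1 : (n : ℝ) - 1 ≠ 0 := by
    have : (2 : ℝ) ≤ n := by exact_mod_cast hn
    linarith
  simp only [fun s : Pairs n => sum_sq_avgStep s.2 x]
  rw [Finset.sum_sub_distrib, ← Finset.sum_div, sum_pairs_sum_sum _ fun a => by simp,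
    sum_sum_sub_sq, hx, Finset.sum_const, Finset.card_univ, nsmul_eq_mul, card_pairs,
    Fintype.card_fin]
  field_simp
  ring

noncomputable def chainFin (x0 : Fin n → ℝ) : (k : ℕ) → (Fin k → Pairs n) → Fin n → ℝ
  | 0, _ => x0
  | k + 1, y => avgStep (y (Fin.last k)).1 (chainFin x0 k (Fin.init y))

lemma chain_eq_chainFin (x0 : Fin n → ℝ) (ω : ℕ → Pairs n) (k : ℕ) :
    chain x0 ω k = chainFin x0 k (fun i : Fin k => ω i) := by
  induction k with
  | zero => rfl
  | succ k ih => exact congrArg (avgStep (ω k).1) ih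

lemma chainFin_snoc (x0 : Fin n → ℝ) {k : ℕ} (z : Fin k → Pairs n) (p : Pairs n) :
    chainFin x0 (k + 1) (Fin.snoc z p) = avgStep p.1 (chainFin x0 k z) := by
  simp [chainFin]

lemma sum_chainFin (x0 : Fin n → ℝ) {k : ℕ} (y : Fin k → Pairs n) :
    ∑ i, chainFin x0 k y i = ∑ i, x0 i := by
  induction k with
  | zero => rfl
  | succ k ih => rw [chainFin, sum_avgStep (y (Fin.last k)).2, ih]

end PairAveraging

instance (n : ℕ) : MeasurableSingletonClass (Pairs n) :=
  ⟨fun _ => MeasurableSpace.measurableSet_top⟩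

lemma measurable_restrict_fin {n : ℕ} (K : ℕ) :
    Measurable fun (ω : ℕ → Pairs n) (i : Fin K) => ω i :=
  measurable_pi_lambda _ fun _ => measurable_pi_apply _

lemma uniformPair_singleton {n : ℕ} (p : Pairs n) :
    uniformPair n {p} = (Fintype.card (Pairs n) : ℝ≥0∞)⁻¹ := by
  rw [uniformPair, Measure.smul_apply, Measure.count_singleton, smul_eq_mul, mul_one]

instance (n : ℕ) : IsFiniteMeasure (uniformPair n) := by
  constructor
  rw [uniformPair, Measure.smul_apply, Measure.count_univ, ENat.card_eq_coe_fintype_card,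
    ENat.toENNReal_coe, smul_eq_mul]
  exact (ENNReal.inv_mul_le_one _).trans_lt ENNReal.one_lt_top

namespace IsProductLaw
variable {n : ℕ} {μ : Measure (ℕ → Pairs n)}

theorem isProbabilityMeasure (hμ : IsProductLaw n μ) : IsProbabilityMeasure μ := by
  have h := hμ 0
  rw [Measure.pi_of_empty] at h
  constructor
  rw [← Set.preimage_univ (f := fun ω (i : Fin 0) => ω i),
    ← Measure.map_apply (measurable_restrict_fin 0) .univ, h, measure_univ]

theorem integral_comp_restrict (hμ : IsProductLaw n μ) {K : ℕ} (g : (Fin K → Pairs n) → ℝ) :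
    ∫ ω, g (fun i : Fin K => ω i) ∂μ = (∑ y, g y) / Fintype.card (Pairs n) ^ K := by
  have := hμ.isProbabilityMeasure
  rw [← integral_map (measurable_restrict_fin K).aemeasurable
    (measurable_of_finite g).aestronglyMeasurable, integral_fintype .of_finite, hμ K,
    Finset.sum_div]
  refine Finset.sum_congr rfl fun y _ => ?_
  simp [measureReal_def, Measure.pi_singleton, uniformPair_singleton, div_eq_inv_mul]

theorem setIntegral_comp_restrict (hμ : IsProductLaw n μ) {K : ℕ} (t : Set (Fin K → Pairs n))
    (g : (Fin K → Pairs n) → ℝ) :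
    ∫ ω in (fun ω (i : Fin K) => ω i) ⁻¹' t, g (fun i => ω i) ∂μ
      = (∑ y, t.indicator g y) / Fintype.card (Pairs n) ^ K := by
  rw [← integral_indicator (measurable_restrict_fin K (Set.toFinite t).measurableSet)]
  exact hμ.integral_comp_restrict (t.indicator g)

theorem martingale_of_sum_snoc (hμ : IsProductLaw n μ) (G : (k : ℕ) → (Fin k → Pairs n) → ℝ)
    (hG : ∀ k z, ∑ p, G (k + 1) (Fin.snoc z p) = Fintype.card (Pairs n) * G k z) :
    Martingale (fun k ω => G k fun i : Fin k => ω i) (pairFiltration n) μ := by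
  have := hμ.isProbabilityMeasure
  have : Nonempty (Pairs n) := (nonempty_of_isProbabilityMeasure μ).map (· 0)
  have hN : (Fintype.card (Pairs n) : ℝ) ≠ 0 := Nat.cast_ne_zero.2 Fintype.card_ne_zero
  refine martingale_of_setIntegral_eq_succ (fun k => ?_) (fun k => ?_) ?_
  · exact ((measurable_of_finite (G k)).comp (comap_measurable _)).stronglyMeasurable
  · exact (Integrable.of_finite (μ := μ.map _)).comp_measurable (measurable_restrict_fin k)
  rintro k _ ⟨t, -, rfl⟩
  change _ = ∫ ω in (fun ω (i : Fin (k + 1)) => ω i) ⁻¹' (Fin.init ⁻¹' t), _ ∂μ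
  rw [hμ.setIntegral_comp_restrict, hμ.setIntegral_comp_restrict,
    ← (Fin.snocEquiv _).sum_comp, Fintype.sum_prod_type, Finset.sum_comm]
  have hrow : ∀ z, ∑ p, (Fin.init ⁻¹' t).indicator (G (k + 1)) (Fin.snocEquiv _ (p, z))
      = Fintype.card (Pairs n) * t.indicator (G k) z := by
    intro z
    by_cases hz : z ∈ t
    · simp [Fin.snocEquiv, hz, hG]
    · simp [Fin.snocEquiv, hz]
  rw [Finset.sum_congr rfl fun z _ => hrow z, ← Finset.mul_sum, pow_succ]
  field_simp

end IsProductLaw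

theorem MeasureTheory.Supermartingale.exists_ae_tendsto_of_nonneg {Ω : Type*}
    {m0 : MeasurableSpace Ω} {μ : Measure Ω} [IsFiniteMeasure μ] {ℱ : Filtration ℕ m0}
    {f : ℕ → Ω → ℝ} (hf : Supermartingale f ℱ μ) (hnonneg : ∀ k, 0 ≤ᵐ[μ] f k) :
    ∀ᵐ ω ∂μ, ∃ c, Tendsto (fun k => f k ω) atTop (nhds c) := by
  have hbdd : ∀ k, eLpNorm ((-f) k) 1 μ ≤ ENNReal.ofReal (∫ ω, f 0 ω ∂μ) := by
    intro k
    have hnorm : ∫ ω, ‖f k ω‖ ∂μ = ∫ ω, f k ω ∂μ :=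
      integral_congr_ae ((hnonneg k).mono fun ω hω => Real.norm_of_nonneg hω)
    have hle : ∫ ω, f k ω ∂μ ≤ ∫ ω, f 0 ω ∂μ := by
      simpa using hf.setIntegral_le (Nat.zero_le k) MeasurableSet.univ
    rw [Pi.neg_apply, eLpNorm_neg, eLpNorm_one_eq_lintegral_enorm,
      ← ofReal_integral_norm_eq_lintegral_enorm (hf.integrable k), hnorm]
    exact ENNReal.ofReal_le_ofReal hle
  filter_upwards [hf.neg.exists_ae_tendsto_of_bdd hbdd] with ω ⟨c, hc⟩
  exact ⟨-c, by simpa using hc.neg⟩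

namespace PairAveraging
variable {n : ℕ}

lemma one_sub_one_div_sub_one_pos (hn : 3 ≤ n) : 0 < 1 - 1 / ((n : ℝ) - 1) := by
  have : (3 : ℝ) ≤ n := by exact_mod_cast hn
  rw [sub_pos, div_lt_one (by linarith)]
  linarith

theorem martingale_sum_sq_chain_div (hn : 3 ≤ n) {μ : Measure (ℕ → Pairs n)}
    (hμ : IsProductLaw n μ) {x0 : Fin n → ℝ} (hx0 : ∑ i, x0 i = 0) :
    Martingale (fun k ω => (∑ i, chain x0 ω k i ^ 2) / (1 - 1 / ((n : ℝ) - 1)) ^ k)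
      (pairFiltration n) μ := by
  have hτ := (one_sub_one_div_sub_one_pos hn).ne'
  simp only [chain_eq_chainFin]
  refine hμ.martingale_of_sum_snoc
    (fun k y => (∑ i, chainFin x0 k y i ^ 2) / (1 - 1 / ((n : ℝ) - 1)) ^ k) fun k z => ?_
  simp only [← Finset.sum_div, chainFin_snoc]
  rw [sum_pairs_sum_sq_avgStep (by omega) ((sum_chainFin x0 z).trans hx0), pow_succ]
  field_simp

end PairAveraging

/-- **Corollary (martingale property and a.s. convergence).** For `n ≥ 3`,
`τ = 1 - 1/(n-1)` and `∑ x₀ᵢ = 0`, the sequence `M_k = S(k)/τ^k` is a nonnegative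
martingale with respect to the filtration `F_k = σ(ω_0,…,ω_{k-1})`, and for
`μₙ`-almost every pair sequence `ω` the limit `lim_k S(k,ω)/τ^k` exists and is finite. -/
theorem L2_martingale_and_as_limit (n : ℕ) (hn : 3 ≤ n)
    (μ : Measure (ℕ → Pairs n)) (hμ : IsProductLaw n μ)
    (x0 : Fin n → ℝ) (hx0 : ∑ i, x0 i = 0) :
    Martingale
      (fun (k : ℕ) (ω : ℕ → Pairs n) =>
        (∑ i, (chain x0 ω k i) ^ 2) / (1 - 1 / ((n : ℝ) - 1)) ^ k)
      (pairFiltration n) μ ∧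
    (∀ (k : ℕ) (ω : ℕ → Pairs n),
        0 ≤ (∑ i, (chain x0 ω k i) ^ 2) / (1 - 1 / ((n : ℝ) - 1)) ^ k) ∧
    ∀ᵐ ω ∂μ, ∃ L : ℝ,
      Tendsto (fun k : ℕ => (∑ i, (chain x0 ω k i) ^ 2) / (1 - 1 / ((n : ℝ) - 1)) ^ k)
        atTop (nhds L) := by
  have hτ := PairAveraging.one_sub_one_div_sub_one_pos hn
  have hnonneg (k : ℕ) (ω : ℕ → Pairs n) :
      0 ≤ (∑ i, chain x0 ω k i ^ 2) / (1 - 1 / ((n : ℝ) - 1)) ^ k := by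
    positivity
  have hmart := PairAveraging.martingale_sum_sq_chain_div hn hμ hx0
  have := hμ.isProbabilityMeasure
  exact ⟨hmart, hnonneg,
    hmart.supermartingale.exists_ae_tendsto_of_nonneg fun k => .of_forall (hnonneg k)⟩
end

section
/- Let n ≥ 2, let θ ∈ (0,1) and set θ̄ = 1 − θ. Let x ∈ ℝ^n satisfy ∑_{i=1}^n x_i = 0. For distinct i, j, let A^θ_{ij}x denote the vector obtained from x by replacing x_i and x_j by θx_i + θ̄x_j and θ̄x_i + θx_j respectively. Then the average over all C(n,2) unordered pairs {i,j} of ∑_{l=1}^n (A^θ_{ij}x)_l² equals (1 − 4θθ̄/(n−1)) ∑_{l=1}^n x_l². -/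
open MeasureTheory Finset Filter
open scoped ENNReal NNReal

/-- The `θ`-averaging operation at the (ordered) pair `(i,j)`: `x_i, x_j` are replaced
by `θ x_i + (1-θ) x_j` and `(1-θ) x_i + θ x_j`. -/
noncomputable def avgTheta {n : ℕ} (θ : ℝ) (i j : Fin n) (x : Fin n → ℝ) : Fin n → ℝ :=
  fun l => if l = i then θ * x i + (1 - θ) * x j
    else if l = j then (1 - θ) * x i + θ * x j else x l

lemma avgTheta_sum_sq {n : ℕ} (θ : ℝ) (i j : Fin n) (hij : i ≠ j) (x : Fin n → ℝ) :
    ∑ l, (avgTheta θ i j x l) ^ 2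
      = (∑ l, x l ^ 2) - 2 * θ * (1 - θ) * (x i - x j) ^ 2 := by
  have hj : j ∈ (Finset.univ : Finset (Fin n)).erase i :=
    Finset.mem_erase.mpr ⟨hij.symm, Finset.mem_univ j⟩
  have key : ∀ f : Fin n → ℝ,
      ∑ l, f l = f i + (f j + ∑ l ∈ ((Finset.univ : Finset (Fin n)).erase i).erase j, f l) := by
    intro f
    rw [← Finset.add_sum_erase _ f (Finset.mem_univ i), ← Finset.add_sum_erase _ f hj]
  rw [key (fun l => (avgTheta θ i j x l) ^ 2), key (fun l => x l ^ 2)]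
  have hrest : ∑ l ∈ ((Finset.univ : Finset (Fin n)).erase i).erase j,
      (avgTheta θ i j x l) ^ 2 = ∑ l ∈ ((Finset.univ : Finset (Fin n)).erase i).erase j, x l ^ 2 := by
    refine Finset.sum_congr rfl fun l hl => ?_
    simp only [Finset.mem_erase] at hl
    simp [avgTheta, hl.1, hl.2.1]
  rw [hrest]
  have hji : ¬ (j = i) := fun h => hij h.symm
  have hi : avgTheta θ i j x i = θ * x i + (1 - θ) * x j := by simp [avgTheta]
  have hjv : avgTheta θ i j x j = (1 - θ) * x i + θ * x j := by simp [avgTheta, hji]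
  rw [hi, hjv]
  ring

/-- **Proposition (one-step `L²` contraction, `θ`-averages).** If `∑ xᵢ = 0` then the
average over all `C(n,2)` unordered pairs `{i,j}` of `∑ₗ (A^θ_{ij}x)ₗ²` equals
`(1 - 4θ(1-θ)/(n-1)) ∑ₗ xₗ²`.  (Since the summed quantity is symmetric in `i,j`, the
average over unordered pairs equals the sum over ordered pairs of distinct indices
divided by `n(n-1)`.) -/
theorem one_step_L2_contraction_theta (n : ℕ) (hn : 2 ≤ n)
    (θ : ℝ) (hθ0 : 0 < θ) (hθ1 : θ < 1)
    (x : Fin n → ℝ) (hx : ∑ i, x i = 0) :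
    (∑ p ∈ (Finset.univ : Finset (Fin n)).offDiag, ∑ l, (avgTheta θ p.1 p.2 x l) ^ 2)
        / ((n : ℝ) * ((n : ℝ) - 1))
      = (1 - 4 * θ * (1 - θ) / ((n : ℝ) - 1)) * ∑ l, x l ^ 2 := by
  have hn1 : (1:ℝ) ≤ (n:ℝ) - 1 := by
    have : (2:ℝ) ≤ n := by exact_mod_cast hn
    linarith
  have hS : ∀ p ∈ (Finset.univ : Finset (Fin n)).offDiag,
      ∑ l, (avgTheta θ p.1 p.2 x l) ^ 2
        = (∑ l, x l ^ 2) - 2 * θ * (1 - θ) * (x p.1 - x p.2) ^ 2 := by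
    intro p hp
    exact avgTheta_sum_sq θ p.1 p.2 (Finset.mem_offDiag.mp hp).2.2 x
  rw [Finset.sum_congr rfl hS]
  rw [Finset.sum_sub_distrib, Finset.sum_const, ← Finset.mul_sum]
  have hcard : ((Finset.univ : Finset (Fin n)).offDiag.card : ℝ) = (n:ℝ) * ((n:ℝ) - 1) := by
    rw [Finset.offDiag_card]
    simp only [Finset.card_univ, Fintype.card_fin]
    have h1 : n ≤ n * n := Nat.le_mul_of_pos_left n (by omega)
    rw [Nat.cast_sub h1]
    push_cast
    ring
  have hsum : ∑ p ∈ (Finset.univ : Finset (Fin n)).offDiag, (x p.1 - x p.2) ^ 2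
      = 2 * (n:ℝ) * ∑ l, x l ^ 2 := by
    have hsub : (Finset.univ : Finset (Fin n)).offDiag ⊆ Finset.univ ×ˢ Finset.univ := by
      intro p hp; simp
    have := Finset.sum_subset hsub (f := fun p : Fin n × Fin n => (x p.1 - x p.2) ^ 2)
      (fun p hp hnp => by
        have : p.1 = p.2 := by
          by_contra h
          exact hnp (Finset.mem_offDiag.mpr ⟨Finset.mem_univ _, Finset.mem_univ _, h⟩)
        simp [this])
    rw [this, Finset.sum_product]
    have inner : ∀ i : Fin n, ∑ j, (x i - x j) ^ 2 = (n:ℝ) * x i ^ 2 + ∑ j, x j ^ 2 := by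
      intro i
      have h2 : ∀ j : Fin n, (x i - x j) ^ 2 = x i ^ 2 - 2 * x i * x j + x j ^ 2 :=
        fun j => by ring
      simp only [h2]
      rw [Finset.sum_add_distrib, Finset.sum_sub_distrib, Finset.sum_const,
        ← Finset.mul_sum, hx, Finset.card_univ, Fintype.card_fin, nsmul_eq_mul]
      ring
    simp only [inner]
    rw [Finset.sum_add_distrib, Finset.sum_const, ← Finset.mul_sum,
      Finset.card_univ, Fintype.card_fin, nsmul_eq_mul]
    ring
  rw [nsmul_eq_mul, hcard, hsum]
  have hne : (n:ℝ) * ((n:ℝ) - 1) ≠ 0 := by positivity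
  have hne1 : (n:ℝ) - 1 ≠ 0 := by linarith
  field_simp
  ring
end

section
/- Let n ≥ 2 and let the repeated averaging chain start from x_0 = (1,0,…,0) ∈ ℝ^n, with T(k) = ∑_{i=1}^n |x_{k,i} − 1/n|. Then for every c > 0 and every integer k ≥ n log n + cn, the expectation of T(k) under μ_n satisfies E(T(k)) ≤ e^{−c/2}. -/
open MeasureTheory Finset Filter
open scoped ENNReal NNReal

/-!
Write `V(x) = ∑ᵢ (xᵢ - 1/n)²` and `y = x - 1/n`. Averaging the pair `{i, j}` lowers `V` by
`(yᵢ - yⱼ)² / 2`; since `∑ᵢ yᵢ = 0`, the mean of this drop over a uniformly chosen pair is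
`V / (n - 1)`. As the chain at time `k` depends only on the first `k` pairs, the expectation is a
uniform average over `Pairsᵏ`, and peeling off the last pair gives
`E V(x_k) = ((n-2)/(n-1))ᵏ V(x₀) ≤ e^{-k/(n-1)}`. Two applications of Cauchy–Schwarz then give
`(E T(k))² ≤ E T(k)² ≤ n E V(x_k) ≤ n e^{-k/(n-1)} ≤ e^{-c}`.
-/

open scoped BigOperators

lemma Finset.sum_sum_mem_eq_sum_card_nsmul {ι κ M : Type*} [Fintype ι] [Fintype κ]
    [AddCommMonoid M] [DecidableEq ι] (S : κ → Finset ι) (f : ι → M) :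
    ∑ k, ∑ i ∈ S k, f i = ∑ i, #{k | i ∈ S k} • f i := by
  rw [Finset.sum_comm' (t' := univ) (s' := fun i => {k | i ∈ S k}) (by simp)]
  simp only [sum_const]

namespace Pairs

variable {n : ℕ}

lemma card_filter_mem (a : Fin n) : #{s : Pairs n | a ∈ s.1} = n - 1 := by
  rw [← show #(univ.erase a) = n - 1 by simp]
  refine (card_bij (fun b hb => (⟨{a, b}, card_pair (ne_of_mem_erase hb).symm⟩ : Pairs n))
    (by simp) (fun b hb b' hb' h => ?_) (fun s hs => ?_)).symm
  · have hab : ({a, b} : Finset (Fin n)) = {a, b'} := congrArg Subtype.val h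
    have : b ∈ ({a, b'} : Finset (Fin n)) := hab ▸ mem_insert_of_mem (mem_singleton_self b)
    simpa [(ne_of_mem_erase hb)] using this
  · have has : a ∈ s.1 := by simpa using hs
    obtain ⟨b, hb⟩ := card_eq_one.mp (by rw [card_erase_of_mem has, s.2] : #(s.1.erase a) = 1)
    have hbs : b ∈ s.1.erase a := hb ▸ mem_singleton_self b
    exact ⟨b, mem_erase.mpr ⟨(mem_erase.mp hbs).1, mem_univ b⟩,
      Subtype.ext (by simp only; rw [← hb, insert_erase has])⟩

lemma card_filter_mem_and_mem (a b : Fin n) :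
    #{s : Pairs n | a ∈ s.1 ∧ b ∈ s.1} = if a = b then n - 1 else 1 := by
  split_ifs with hab
  · simp [hab, card_filter_mem]
  · rw [card_eq_one]
    refine ⟨⟨{a, b}, card_pair hab⟩, eq_singleton_iff_unique_mem.mpr ⟨by simp, ?_⟩⟩
    rintro s hs
    simp only [mem_filter, mem_univ, true_and] at hs
    exact Subtype.ext (eq_of_subset_of_card_le (by simp [insert_subset_iff, hs])
      (by rw [s.2, card_pair hab])).symm

lemma sum_sum_mem (f : Fin n → ℝ) :
    ∑ s : Pairs n, ∑ l ∈ s.1, f l = (n - 1) * ∑ l, f l := by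
  rw [sum_sum_mem_eq_sum_card_nsmul, mul_sum]
  refine sum_congr rfl fun l _ => ?_
  rw [card_filter_mem, nsmul_eq_mul, Nat.cast_pred l.pos]

lemma sum_sq_sum_mem (y : Fin n → ℝ) :
    ∑ s : Pairs n, (∑ l ∈ s.1, y l) ^ 2 = (∑ l, y l) ^ 2 + (n - 2) * ∑ l, y l ^ 2 := by
  have hsq (s : Pairs n) : (∑ l ∈ s.1, y l) ^ 2 = ∑ p ∈ s.1 ×ˢ s.1, y p.1 * y p.2 := by
    rw [sq, sum_mul_sum, sum_product]
  simp_rw [hsq, sum_sum_mem_eq_sum_card_nsmul, mem_product, Fintype.sum_prod_type,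
    card_filter_mem_and_mem, sq, sum_mul_sum, mul_sum, ← sum_add_distrib]
  refine sum_congr rfl fun a _ => ?_
  rw [Fintype.sum_eq_add_sum_compl a, Fintype.sum_eq_add_sum_compl a (fun j => y a * y j),
    if_pos rfl, nsmul_eq_mul, Nat.cast_pred a.pos]
  rw [sum_congr rfl fun x hx => by rw [if_neg (by simpa [eq_comm] using hx), one_smul]]
  ring

lemma cast_card_eq : (Fintype.card (Pairs n) : ℝ) = n * (n - 1) / 2 := by
  simp [Nat.cast_choose_two]

end Pairs

section avgStep

variable {n : ℕ} {s : Finset (Fin n)}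

lemma sum_comp_avgStep (hs : #s = 2) (x : Fin n → ℝ) (g : ℝ → ℝ) :
    ∑ i, g (avgStep s x i) = ∑ i ∈ sᶜ, g (x i) + 2 * g ((∑ m ∈ s, x m) / 2) := by
  have hout : ∀ i ∈ sᶜ, g (avgStep s x i) = g (x i) := fun i hi => by
    rw [avgStep, if_neg (mem_compl.mp hi)]
  have hin : ∀ i ∈ s, g (avgStep s x i) = g ((∑ m ∈ s, x m) / 2) := fun i hi => by
    rw [avgStep, if_pos hi]
  rw [← sum_compl_add_sum s, sum_congr rfl hout, sum_congr rfl hin, sum_const, hs, two_nsmul,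
    two_mul]

lemma sum_avgStep (hs : #s = 2) (x : Fin n → ℝ) : ∑ i, avgStep s x i = ∑ i, x i := by
  have h := sum_comp_avgStep hs x id
  simp only [id] at h
  rw [h, ← sum_compl_add_sum s x]
  ring

lemma sum_sq_sub_avgStep (hs : #s = 2) (x : Fin n → ℝ) (a : ℝ) :
    ∑ i, (avgStep s x i - a) ^ 2 =
      ∑ i, (x i - a) ^ 2 + (∑ l ∈ s, (x l - a)) ^ 2 / 2 - ∑ l ∈ s, (x l - a) ^ 2 := by
  rw [sum_comp_avgStep hs x (fun t => (t - a) ^ 2), ← sum_compl_add_sum s, sum_sub_distrib,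
    sum_const, hs]
  simp only [nsmul_eq_mul]
  push_cast
  ring

lemma sum_pairs_sum_sq_sub_avgStep (x : Fin n → ℝ) (a : ℝ) :
    ∑ s : Pairs n, ∑ i, (avgStep s.1 x i - a) ^ 2 =
      n * (n - 2) / 2 * ∑ i, (x i - a) ^ 2 + (∑ i, (x i - a)) ^ 2 / 2 := by
  simp_rw [fun s : Pairs n => sum_sq_sub_avgStep s.2 x a]
  rw [sum_sub_distrib, sum_add_distrib, ← sum_div, Pairs.sum_sq_sum_mem, Pairs.sum_sum_mem,
    sum_const, card_univ, nsmul_eq_mul, Pairs.cast_card_eq]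
  ring

end avgStep

noncomputable def sqDistUniform {n : ℕ} (x : Fin n → ℝ) : ℝ := ∑ i, (x i - 1 / n) ^ 2

lemma expect_sqDistUniform_avgStep {n : ℕ} (hn : 2 ≤ n) {x : Fin n → ℝ} (hx : ∑ i, x i = 1) :
    𝔼 s : Pairs n, sqDistUniform (avgStep s.1 x) = (n - 2) / (n - 1) * sqDistUniform x := by
  have hcentered : ∑ i, (x i - 1 / n) = 0 := by
    rw [sum_sub_distrib, hx, sum_const, card_univ, Fintype.card_fin, nsmul_eq_mul]
    field_simp
    ring
  rw [expect_eq_sum_div_card, card_univ, Pairs.cast_card_eq]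
  simp only [sqDistUniform]
  rw [sum_pairs_sum_sq_sub_avgStep, hcentered]
  field_simp
  ring

noncomputable def finChain {n : ℕ} (x0 : Fin n → ℝ) : {k : ℕ} → (Fin k → Pairs n) → Fin n → ℝ
  | 0, _ => x0
  | _ + 1, σ => avgStep (σ (Fin.last _)).1 (finChain x0 (Fin.init σ))

section finChain

variable {n : ℕ} (x0 : Fin n → ℝ)

lemma chain_eq_finChain (ω : ℕ → Pairs n) (k : ℕ) :
    chain x0 ω k = finChain x0 (fun i : Fin k => ω i) := by
  induction k with
  | zero => rfl
  | succ k ih => rw [chain, ih]; rfl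

lemma finChain_snoc {k : ℕ} (τ : Fin k → Pairs n) (s : Pairs n) :
    finChain x0 (Fin.snoc τ s : Fin (k + 1) → Pairs n) = avgStep s.1 (finChain x0 τ) := by
  simp [finChain, Fin.init_snoc]

lemma sum_finChain {k : ℕ} (σ : Fin k → Pairs n) : ∑ i, finChain x0 σ i = ∑ i, x0 i := by
  induction k with
  | zero => rfl
  | succ k ih => rw [finChain, sum_avgStep (σ _).2, ih]

lemma expect_sqDistUniform_finChain (hn : 2 ≤ n) (hx0 : ∑ i, x0 i = 1) (k : ℕ) :
    𝔼 σ : Fin k → Pairs n, sqDistUniform (finChain x0 σ) =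
      ((n - 2) / (n - 1)) ^ k * sqDistUniform x0 := by
  induction k with
  | zero => simp [finChain]
  | succ k ih =>
    rw [← Fintype.expect_equiv ((Equiv.prodComm _ _).trans (Fin.snocEquiv fun _ => Pairs n))
        (fun p => sqDistUniform (avgStep p.2.1 (finChain x0 p.1))) _
        (fun p => congrArg sqDistUniform (finChain_snoc x0 p.1 p.2).symm),
      ← univ_product_univ, expect_product' univ univ
        fun (τ : Fin k → Pairs n) (s : Pairs n) => sqDistUniform (avgStep s.1 (finChain x0 τ))]
    simp_rw [expect_sqDistUniform_avgStep hn ((sum_finChain x0 _).trans hx0), ← mul_expect, ih]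
    ring

end finChain

section uniformPair

variable {n : ℕ}

lemma isProbabilityMeasure_uniformPair (hn : 2 ≤ n) : IsProbabilityMeasure (uniformPair n) := by
  have hcard : (Fintype.card (Pairs n) : ℝ≥0∞) ≠ 0 := by
    simpa using (Nat.choose_pos hn).ne'
  constructor
  rw [uniformPair, Measure.smul_apply, Measure.count_univ, ENat.card_eq_coe_fintype_card,
    ENat.toENNReal_coe, smul_eq_mul, ENNReal.inv_mul_cancel hcard (ENNReal.natCast_ne_top _)]

lemma integral_pi_uniformPair (hn : 2 ≤ n) {K : ℕ} (F : (Fin K → Pairs n) → ℝ) :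
    ∫ σ, F σ ∂Measure.pi (fun _ : Fin K => uniformPair n) = 𝔼 σ, F σ := by
  have := isProbabilityMeasure_uniformPair hn
  rw [integral_fintype .of_finite, expect_eq_sum_div_card, sum_div]
  refine sum_congr rfl fun σ _ => ?_
  rw [measureReal_def, Measure.pi_singleton]
  simp [uniformPair, ENNReal.toReal_inv, div_eq_inv_mul]

lemma IsProductLaw.integral_comp_restrict_s9 {μ : Measure (ℕ → Pairs n)} (hμ : IsProductLaw n μ)
    (hn : 2 ≤ n) {K : ℕ} (F : (Fin K → Pairs n) → ℝ) :
    ∫ ω, F (fun i : Fin K => ω i) ∂μ = 𝔼 σ, F σ := by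
  rw [← integral_pi_uniformPair hn, ← hμ K, integral_map
    (by fun_prop : Measurable fun (ω : ℕ → Pairs n) (i : Fin K) => ω i).aemeasurable
    (measurable_of_countable F).aestronglyMeasurable]

end uniformPair

lemma sq_expect_le_expect_sq {ι : Type*} [Fintype ι] [Nonempty ι] (f : ι → ℝ) :
    (𝔼 i, f i) ^ 2 ≤ 𝔼 i, f i ^ 2 := by
  simpa using expect_mul_sq_le_sq_mul_sq univ f 1

section uniformVector

variable {n : ℕ}

lemma sq_sum_abs_sub_le_mul_sqDistUniform (x : Fin n → ℝ) : (∑ i, |x i - 1 / n|) ^ 2 ≤ n * sqDistUniform x := by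
  simpa [sqDistUniform] using sq_sum_le_card_mul_sum_sq (s := univ) (f := fun i => |x i - 1 / n|)

lemma sum_e1 (hn : 0 < n) : ∑ i, e1 n i = 1 := by
  simp only [e1, sum_boole, Nat.cast_eq_one, card_eq_one]
  exact ⟨⟨0, hn⟩, by ext i; simp [Fin.ext_iff]⟩

lemma sqDistUniform_e1 (hn : 0 < n) : sqDistUniform (e1 n) = 1 - 1 / n := by
  have hsq (i : Fin n) : (e1 n i - 1 / n) ^ 2 = (1 - 2 / n) * e1 n i + 1 / n ^ 2 := by
    by_cases h : i.val = 0
    · simp only [e1, h, if_true]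
      ring
    · simp [e1, h]
  simp only [sqDistUniform, hsq, sum_add_distrib, ← mul_sum, sum_e1 hn, sum_const, card_univ,
    Fintype.card_fin, nsmul_eq_mul]
  field_simp
  ring

lemma mul_pow_le_exp_neg (hn : 2 ≤ n) {c : ℝ} {k : ℕ} (hk : n * Real.log n + c * n ≤ k) :
    n * ((n - 2) / (n - 1) : ℝ) ^ k ≤ Real.exp (-c) := by
  have hn' : (2 : ℝ) ≤ n := by exact_mod_cast hn
  have hρ : (n - 2) / (n - 1 : ℝ) = -(1 / (n - 1)) + 1 := by
    have : (n - 1 : ℝ) ≠ 0 := by linarith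
    field_simp
    ring
  have hkn : Real.log n + c ≤ k / n := by rw [le_div_iff₀ (by linarith)]; linarith
  have hkn' : (k / n : ℝ) ≤ k / (n - 1) := div_le_div_of_nonneg_left k.cast_nonneg (by linarith)
    (by linarith)
  calc n * ((n - 2) / (n - 1) : ℝ) ^ k
      ≤ n * Real.exp (-(1 / (n - 1))) ^ k := by
        rw [hρ]
        gcongr
        · linarith [div_le_one_of_le₀ (by linarith : (1 : ℝ) ≤ n - 1) (by linarith)]
        · exact Real.add_one_le_exp _
    _ = Real.exp (Real.log n - k / (n - 1)) := by
        rw [← Real.exp_nat_mul, Real.exp_sub, Real.exp_log (by linarith), div_eq_mul_inv (n : ℝ),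
          ← Real.exp_neg]
        ring_nf
    _ ≤ Real.exp (-c) := Real.exp_le_exp.mpr (by linarith)

end uniformVector

theorem expected_L1_bound_general (n : ℕ) (hn : 2 ≤ n)
    (μ : Measure (ℕ → Pairs n)) (hμ : IsProductLaw n μ)
    (c : ℝ) (k : ℕ)
    (hk : (n : ℝ) * Real.log n + c * n ≤ k) :
    ∫ ω, Tdist (e1 n) ω k ∂μ ≤ Real.exp (-c / 2) := by
  have : Nonempty (Pairs n) := Fintype.card_pos_iff.mp (by simpa using Nat.choose_pos hn)
  let L1 (σ : Fin k → Pairs n) : ℝ := ∑ i, |finChain (e1 n) σ i - 1 / n|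
  have hint : ∫ ω, Tdist (e1 n) ω k ∂μ = 𝔼 σ, L1 σ := by
    simp only [Tdist, chain_eq_finChain]
    exact hμ.integral_comp_restrict_s9 hn L1
  have hsq : (𝔼 σ, L1 σ) ^ 2 ≤ Real.exp (-c) := calc
    _ ≤ 𝔼 σ, L1 σ ^ 2 := sq_expect_le_expect_sq L1
    _ ≤ 𝔼 σ, n * sqDistUniform (finChain (e1 n) σ) :=
        expect_le_expect fun σ _ => sq_sum_abs_sub_le_mul_sqDistUniform _
    _ = n * ((n - 2) / (n - 1)) ^ k * (1 - 1 / n) := by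
        rw [← mul_expect, expect_sqDistUniform_finChain _ hn (sum_e1 (by omega)),
          sqDistUniform_e1 (by omega), mul_assoc]
    _ ≤ n * ((n - 2) / (n - 1)) ^ k := by
        have hn' : (2 : ℝ) ≤ n := by exact_mod_cast hn
        refine mul_le_of_le_one_right ?_ (sub_le_self _ (by positivity))
        exact mul_nonneg n.cast_nonneg (pow_nonneg (div_nonneg (by linarith) (by linarith)) k)
    _ ≤ Real.exp (-c) := mul_pow_le_exp_neg hn hk
  rw [hint, Real.exp_half]
  exact Real.le_sqrt_of_sq_le hsq

/-- **`L¹` convergence shortly after `n log n`.** Starting from `x₀ = (1,0,…,0)`,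
for every `c > 0` and every integer `k ≥ n log n + c n`, `E(T(k)) ≤ e^{-c/2}`. -/
theorem expected_L1_bound (n : ℕ) (hn : 2 ≤ n)
    (μ : Measure (ℕ → Pairs n)) (hμ : IsProductLaw n μ)
    (c : ℝ) (hc : 0 < c) (k : ℕ)
    (hk : (n : ℝ) * Real.log n + c * n ≤ k) :
    ∫ ω, Tdist (e1 n) ω k ∂μ ≤ Real.exp (-c / 2) :=
  expected_L1_bound_general n hn μ hμ c k hk
end

section
/- Let n ≥ 2 and suppose n is not a power of 2. Let x_0 = (1 − 1/n, −1/n, …, −1/n) ∈ ℝ^n. Then for every finite sequence of pair-averaging operations (at arbitrary pairs of distinct indices), the resulting vector x_k is not the zero vector. Equivalently, starting from (1,0,…,0), no finite sequence of pair-averaging operations produces the constant vector (1/n, …, 1/n). -/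
/-!
After `k` averaging steps from an integer vector every coordinate lies in `2⁻ᵏ ℤ`, whereas
`1 / n ∈ 2⁻ᵏ ℤ` forces `n ∣ 2 ^ k`. Averaging commutes with subtracting a constant, which
transfers this to the start `e₁ - 1 / n`.
-/

open MeasureTheory Finset Filter
open scoped ENNReal NNReal

lemma avgStep_sub_const {n : ℕ} {s : Finset (Fin n)} (hs : s.card = 2) (x : Fin n → ℝ) (c : ℝ) :
    avgStep s (fun i => x i - c) = fun i => avgStep s x i - c := by
  funext l
  unfold avgStep
  split
  · rw [sum_sub_distrib, sum_const, hs]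
    ring
  · rfl

lemma chain_sub_const {n : ℕ} (x0 : Fin n → ℝ) (c : ℝ) (ω : ℕ → Pairs n) (k : ℕ) :
    chain (fun i => x0 i - c) ω k = fun i => chain x0 ω k i - c := by
  induction k with
  | zero => rfl
  | succ k ih => rw [chain, ih, avgStep_sub_const (ω k).2]; rfl

lemma exists_int_eq_two_pow_mul_chain {n : ℕ} {x0 : Fin n → ℝ} (hx0 : ∀ i, ∃ z : ℤ, x0 i = z)
    (ω : ℕ → Pairs n) (k : ℕ) (i : Fin n) : ∃ z : ℤ, 2 ^ k * chain x0 ω k i = z := by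
  induction k generalizing i with
  | zero => simpa [chain] using hx0 i
  | succ k ih =>
    choose z hz using ih
    rw [chain, avgStep]
    split
    · refine ⟨∑ m ∈ (ω k).1, z m, ?_⟩
      push_cast
      simp only [← hz, ← mul_sum, pow_succ]
      ring
    · exact ⟨2 * z i, by rw [pow_succ, Int.cast_mul, ← hz]; push_cast; ring⟩

lemma exists_eq_two_pow_of_two_pow_div_eq_intCast {n k : ℕ} {z : ℤ} (hn : n ≠ 0)
    (h : (2 : ℝ) ^ k / n = z) : ∃ r, n = 2 ^ r := by
  have hdvd : (n : ℤ) ∣ 2 ^ k := ⟨z, by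
    rw [div_eq_iff (by exact_mod_cast hn)] at h
    exact_mod_cast h.trans (mul_comm _ _)⟩
  obtain ⟨r, -, hr⟩ := (Nat.dvd_prime_pow Nat.prime_two).mp (by exact_mod_cast hdvd)
  exact ⟨r, hr⟩

/-- **No finite termination unless `n` is a power of 2.** If `n` is not a power of `2`,
then starting from `x₀ = (1 - 1/n, -1/n, …, -1/n)` no finite sequence of pair-averaging
operations produces the zero vector; equivalently, starting from `(1,0,…,0)` no finite
sequence of pair-averaging operations produces the constant vector `(1/n,…,1/n)`. -/
theorem no_finite_termination (n : ℕ) (hn : 2 ≤ n) (hnot : ¬ ∃ r : ℕ, n = 2 ^ r)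
    (ω : ℕ → Pairs n) (k : ℕ) :
    chain (fun i => (if i.val = 0 then (1 : ℝ) else 0) - 1 / n) ω k ≠ (fun _ => 0) ∧
    chain (e1 n) ω k ≠ (fun _ => (1 / n : ℝ)) := by
  let i0 : Fin n := ⟨0, by omega⟩
  have he1 : ∀ i, ∃ z : ℤ, e1 n i = z := fun i => ⟨if i.val = 0 then 1 else 0, by
    unfold e1; split <;> simp⟩
  have hne : chain (e1 n) ω k i0 ≠ 1 / n := by
    intro h
    obtain ⟨z, hz⟩ := exists_int_eq_two_pow_mul_chain he1 ω k i0
    rw [h, mul_one_div] at hz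
    exact hnot (exists_eq_two_pow_of_two_pow_div_eq_intCast (by omega) hz)
  refine ⟨fun h => hne ?_, fun h => hne (congrFun h i0)⟩
  change chain (fun i => e1 n i - 1 / n) ω k = _ at h
  rw [chain_sub_const] at h
  exact sub_eq_zero.mp (congrFun h i0)
end

section
/- Let n ≥ 2 and let x_0 = (1 − 1/n, −1/n, …, −1/n) ∈ ℝ^n. Then for every finite sequence of pair-averaging operations and every coordinate i, the resulting value x_{k,i} equals m/2^l − 1/n for some nonnegative integers m and l where m is odd or m = 0. -/
open MeasureTheory Finset Filter
open scoped ENNReal NNReal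

lemma dyadic_reduce : ∀ (L N : ℕ), N ≤ 2^L → ∃ m l : ℕ, (Odd m ∨ m = 0) ∧
    (N : ℝ) / 2 ^ L = (m : ℝ) / 2 ^ l ∧ m ≤ 2 ^ l := by
  intro L
  induction L with
  | zero =>
    intro N hN
    interval_cases N
    · exact ⟨0, 0, Or.inr rfl, by norm_num, by norm_num⟩
    · exact ⟨1, 0, Or.inl ⟨0, rfl⟩, by norm_num, by norm_num⟩
  | succ L ih =>
    intro N hN
    rcases Nat.even_or_odd N with he | ho
    · obtain ⟨N', rfl⟩ := he
      have hp : 2 ^ (L + 1) = 2 ^ L * 2 := pow_succ 2 L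
      have h' : N' ≤ 2 ^ L := by omega
      obtain ⟨m, l, h1, h2, h3⟩ := ih N' h'
      refine ⟨m, l, h1, ?_, h3⟩
      rw [← h2]
      push_cast
      rw [pow_succ]
      ring
    · exact ⟨N, L + 1, Or.inl ho, rfl, hN⟩

/-- **Dyadic structure of the chain.** Starting from `x₀ = (1 - 1/n, -1/n, …, -1/n)`,
after any finite sequence of pair-averaging operations every coordinate has the form
`m/2^l - 1/n` for nonnegative integers `m, l` with `m` odd or `m = 0`. -/
theorem dyadic_form (n : ℕ) (hn : 2 ≤ n) (ω : ℕ → Pairs n) (k : ℕ) (i : Fin n) :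
    ∃ m l : ℕ, (Odd m ∨ m = 0) ∧
      chain (fun i => (if i.val = 0 then (1 : ℝ) else 0) - 1 / n) ω k i
        = (m : ℝ) / 2 ^ l - 1 / n := by
  have hn0 : (n : ℝ) ≠ 0 := by positivity
  suffices h : ∀ k (i : Fin n), ∃ m l : ℕ, (Odd m ∨ m = 0) ∧
      chain (fun i => (if i.val = 0 then (1 : ℝ) else 0) - 1 / n) ω k i
        = (m : ℝ) / 2 ^ l - 1 / n ∧ m ≤ 2 ^ l by
    obtain ⟨m, l, h1, h2, _⟩ := h k i
    exact ⟨m, l, h1, h2⟩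
  clear i
  intro k
  induction k with
  | zero =>
    intro i
    by_cases hi : i.val = 0
    · exact ⟨1, 0, Or.inl ⟨0, rfl⟩, by simp [chain, hi], by norm_num⟩
    · exact ⟨0, 0, Or.inr rfl, by simp [chain, hi], by norm_num⟩
  | succ k ih =>
    intro i
    show ∃ m l : ℕ, _ ∧ avgStep (ω k).1 _ i = _ ∧ _
    rw [avgStep]
    by_cases hi : i ∈ (ω k).1
    · obtain ⟨a, b, hab, hs⟩ := Finset.card_eq_two.mp (ω k).2
      obtain ⟨ma, la, ha1, ha2, ha3⟩ := ih a
      obtain ⟨mb, lb, hb1, hb2, hb3⟩ := ih b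
      have hsum : ∑ m ∈ (ω k).1,
          chain (fun i => (if i.val = 0 then (1 : ℝ) else 0) - 1 / n) ω k m
          = ((ma : ℝ) / 2 ^ la - 1 / n) + ((mb : ℝ) / 2 ^ lb - 1 / n) := by
        rw [hs, Finset.sum_pair hab, ha2, hb2]
      set N : ℕ := ma * 2 ^ lb + mb * 2 ^ la with hN
      set L : ℕ := la + lb + 1 with hL
      have hNL : N ≤ 2 ^ L := by
        have h1 : ma * 2 ^ lb ≤ 2 ^ la * 2 ^ lb := Nat.mul_le_mul_right _ ha3
        have h2 : mb * 2 ^ la ≤ 2 ^ lb * 2 ^ la := Nat.mul_le_mul_right _ hb3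
        have h3 : 2 ^ L = 2 ^ la * 2 ^ lb + 2 ^ lb * 2 ^ la := by
          rw [hL, pow_succ, pow_add]; ring
        omega
      obtain ⟨m, l, h1, h2, h3⟩ := dyadic_reduce L N hNL
      refine ⟨m, l, h1, ?_, h3⟩
      rw [if_pos hi, hsum, ← h2, hN, hL]
      push_cast
      field_simp
      ring
    · obtain ⟨m, l, h1, h2, h3⟩ := ih i
      exact ⟨m, l, h1, by rw [if_neg hi]; exact h2, h3⟩
end

section
/- Let n = 2^r for some positive integer r. Then there exists a finite sequence of pairs of distinct indices in {1,…,n} (depending only on n, not on the initial vector) such that for every x_0 ∈ ℝ^n, applying the corresponding pair-averaging operations in order to x_0 yields the constant vector whose every coordinate equals (1/n) ∑_{i=1}^n x_{0,i}. -/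
open MeasureTheory Finset Filter
open scoped ENNReal NNReal

/-!
Averaging each half of `Fin (2 ^ r + 2 ^ r)` separately (by induction on `r`) makes each half
constant, equal to its own mean; averaging every coordinate of the first half with the
corresponding coordinate of the second half then produces the overall mean everywhere,
because these `2 ^ r` pairs are disjoint.
-/

theorem Fin.castAdd_ne_natAdd {m k : ℕ} (i : Fin m) (j : Fin k) :
    Fin.castAdd k i ≠ Fin.natAdd m j :=
  Fin.ne_of_val_ne (by simp only [Fin.val_castAdd, Fin.val_natAdd]; omega)

namespace Pairs

theorem nonempty_of_two_le {n : ℕ} (hn : 2 ≤ n) : Nonempty (Pairs n) :=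
  let ⟨t, _, ht⟩ := Finset.exists_subset_card_eq (s := Finset.univ) (by simpa using hn)
  ⟨⟨t, ht⟩⟩

def map {m n : ℕ} (f : Fin m ↪ Fin n) (p : Pairs m) : Pairs n :=
  ⟨p.1.map f, (Finset.card_map f).trans p.2⟩

end Pairs

def crossPair {m : ℕ} (i : Fin m) : Pairs (m + m) :=
  ⟨{Fin.castAdd m i, Fin.natAdd m i}, Finset.card_pair (Fin.castAdd_ne_natAdd i i)⟩

section avgSteps

variable {n : ℕ}

noncomputable def avgSteps (L : List (Pairs n)) (x : Fin n → ℝ) : Fin n → ℝ :=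
  L.foldl (fun y p => avgStep p.1 y) x

@[simp]
theorem avgSteps_nil (x : Fin n → ℝ) : avgSteps [] x = x := rfl

@[simp]
theorem avgSteps_cons (p : Pairs n) (L : List (Pairs n)) (x : Fin n → ℝ) :
    avgSteps (p :: L) x = avgSteps L (avgStep p.1 x) := rfl

theorem avgSteps_append (L L' : List (Pairs n)) (x : Fin n → ℝ) :
    avgSteps (L ++ L') x = avgSteps L' (avgSteps L x) := List.foldl_append

theorem chain_succ_eq_chain_tail (x0 : Fin n → ℝ) (ω : ℕ → Pairs n) (k : ℕ) :
    chain x0 ω (k + 1) = chain (avgStep (ω 0).1 x0) (fun j => ω (j + 1)) k := by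
  induction k with
  | zero => rfl
  | succ k ih => exact congrArg (avgStep (ω (k + 1)).1) ih

theorem chain_getD_length (L : List (Pairs n)) (d : Pairs n) (x0 : Fin n → ℝ) :
    chain x0 (L.getD · d) L.length = avgSteps L x0 := by
  induction L generalizing x0 with
  | nil => rfl
  | cons p L ih => exact (chain_succ_eq_chain_tail _ _ _).trans (ih _)

theorem avgSteps_apply_of_forall_notMem {L : List (Pairs n)} {l : Fin n}
    (hl : ∀ p ∈ L, l ∉ p.1) (x : Fin n → ℝ) : avgSteps L x l = x l := by
  induction L generalizing x with
  | nil => rfl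
  | cons p L ih =>
    simp only [List.forall_mem_cons] at hl
    rw [avgSteps_cons, ih hl.2, avgStep, if_neg hl.1]

theorem avgSteps_apply_of_pairwise_disjoint {L : List (Pairs n)}
    (hL : L.Pairwise fun p q => Disjoint p.1 q.1) {p : Pairs n} (hp : p ∈ L) {l : Fin n}
    (hl : l ∈ p.1) (x : Fin n → ℝ) : avgSteps L x l = (∑ i ∈ p.1, x i) / 2 := by
  induction L generalizing x with
  | nil => cases hp
  | cons q L ih =>
    rw [List.pairwise_cons] at hL
    rw [avgSteps_cons]
    rcases List.mem_cons.mp hp with rfl | hp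
    · rw [avgSteps_apply_of_forall_notMem (fun q hq => (hL.1 q hq).notMem_of_mem_left_finset hl),
        avgStep, if_pos hl]
    · rw [ih hL.2 hp]
      congr 1
      refine Finset.sum_congr rfl fun i hi => ?_
      rw [avgStep, if_neg ((hL.1 p hp).notMem_of_mem_right_finset hi)]

end avgSteps

section append

variable {m k : ℕ}

theorem avgStep_map_castAdd (s : Finset (Fin m)) (u : Fin m → ℝ) (v : Fin k → ℝ) :
    avgStep (s.map (Fin.castAddEmb k)) (Fin.append u v) = Fin.append (avgStep s u) v := by
  funext l
  refine Fin.addCases (fun i => ?_) (fun i => ?_) l <;> simp [avgStep, Fin.castAdd_ne_natAdd]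

theorem avgStep_map_natAdd (s : Finset (Fin k)) (u : Fin m → ℝ) (v : Fin k → ℝ) :
    avgStep (s.map (Fin.natAddEmb m)) (Fin.append u v) = Fin.append u (avgStep s v) := by
  funext l
  refine Fin.addCases (fun i => ?_) (fun i => ?_) l <;>
    simp [avgStep, (Fin.castAdd_ne_natAdd _ _).symm]

theorem avgSteps_map_castAdd (L : List (Pairs m)) (u : Fin m → ℝ) (v : Fin k → ℝ) :
    avgSteps (L.map (Pairs.map (Fin.castAddEmb k))) (Fin.append u v) =
      Fin.append (avgSteps L u) v := by
  induction L generalizing u with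
  | nil => rfl
  | cons p L ih => exact (congrArg _ (avgStep_map_castAdd p.1 u v)).trans (ih _)

theorem avgSteps_map_natAdd (L : List (Pairs k)) (u : Fin m → ℝ) (v : Fin k → ℝ) :
    avgSteps (L.map (Pairs.map (Fin.natAddEmb m))) (Fin.append u v) =
      Fin.append u (avgSteps L v) := by
  induction L generalizing v with
  | nil => rfl
  | cons p L ih => exact (congrArg _ (avgStep_map_natAdd p.1 u v)).trans (ih _)

end append

theorem pairwise_disjoint_crossPair (m : ℕ) :
    ((List.finRange m).map crossPair).Pairwise fun p q => Disjoint p.1 q.1 :=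
  List.Pairwise.map crossPair (fun i j hij => by
    simp only [crossPair, Finset.disjoint_insert_left, Finset.disjoint_singleton_left,
      Finset.mem_insert, Finset.mem_singleton, Fin.castAdd_inj, Fin.natAdd_inj, hij,
      Fin.castAdd_ne_natAdd, (Fin.castAdd_ne_natAdd _ _).symm, or_self, not_false_eq_true,
      and_self])
    (List.nodup_finRange m)

theorem avgSteps_crossPair {m : ℕ} (u v : Fin m → ℝ) :
    avgSteps ((List.finRange m).map crossPair) (Fin.append u v) =
      Fin.append (fun i => (u i + v i) / 2) (fun i => (u i + v i) / 2) := by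
  have key (i : Fin m) {l} (hl : l ∈ (crossPair i).1) :
      avgSteps ((List.finRange m).map crossPair) (Fin.append u v) l = (u i + v i) / 2 := by
    rw [avgSteps_apply_of_pairwise_disjoint (pairwise_disjoint_crossPair m)
      (List.mem_map_of_mem (List.mem_finRange i)) hl, crossPair,
      Finset.sum_pair (Fin.castAdd_ne_natAdd i i), Fin.append_left, Fin.append_right]
  funext l
  refine Fin.addCases (fun i => ?_) (fun i => ?_) l
  · rw [key i (by simp [crossPair]), Fin.append_left]
  · rw [key i (by simp [crossPair]), Fin.append_right]

def IsAveragingScheme {n : ℕ} (L : List (Pairs n)) : Prop :=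
  ∀ x : Fin n → ℝ, avgSteps L x = fun _ => (∑ i, x i) / n

theorem isAveragingScheme_nil_one : IsAveragingScheme ([] : List (Pairs 1)) := fun x => by
  funext l
  simp [Subsingleton.elim l 0]

theorem IsAveragingScheme.double {m : ℕ} {L : List (Pairs m)} (hL : IsAveragingScheme L) :
    IsAveragingScheme (L.map (Pairs.map (Fin.castAddEmb m)) ++
      L.map (Pairs.map (Fin.natAddEmb m)) ++ (List.finRange m).map crossPair) := by
  intro x
  obtain ⟨u, v, rfl⟩ : ∃ u v, x = Fin.append u v := ⟨_, _, Fin.append_castAdd_natAdd.symm⟩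
  rw [avgSteps_append, avgSteps_append, avgSteps_map_castAdd, avgSteps_map_natAdd, hL, hL,
    avgSteps_crossPair, Fin.sum_univ_add]
  funext l
  refine Fin.addCases (fun i => ?_) (fun i => ?_) l <;>
  · simp only [Fin.append_left, Fin.append_right]
    push_cast
    ring

theorem exists_isAveragingScheme_two_pow (r : ℕ) :
    ∃ L : List (Pairs (2 ^ r)), IsAveragingScheme L := by
  induction r with
  | zero => exact ⟨[], isAveragingScheme_nil_one⟩
  | succ r ih =>
    obtain ⟨L, hL⟩ := ih
    rw [pow_succ, mul_two]
    exact ⟨_, hL.double⟩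

/-- **Finite termination scheme for powers of 2.** If `n = 2^r` (`r ≥ 1`), there is a
finite sequence of pairs, depending only on `n`, such that applying the corresponding
pair-averaging operations to any `x₀ ∈ ℝⁿ` yields the constant vector with all
coordinates equal to `(1/n) ∑ᵢ x₀ᵢ`. -/
theorem termination_scheme_pow_two (n r : ℕ) (hr : 1 ≤ r) (hn : n = 2 ^ r) :
    ∃ (K : ℕ) (ω : ℕ → Pairs n), ∀ x0 : Fin n → ℝ,
      chain x0 ω K = fun _ => (∑ i, x0 i) / n := by
  subst hn
  obtain ⟨L, hL⟩ := exists_isAveragingScheme_two_pow r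
  obtain ⟨d⟩ := Pairs.nonempty_of_two_le (Nat.le_self_pow (by omega) 2 : 2 ≤ 2 ^ r)
  exact ⟨L.length, (L.getD · d), fun x0 => (chain_getD_length L d x0).trans (hL x0)⟩
end
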